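/- The higher-dimensional prolate operator W f = ∇·((1-|x|²)∇f) - |x|² f commutes with the Fourier transform on Schwartz functions: ℱ W ℱ^{-1} = W. Equivalently, W = L + M - 1 where both sides commute with ℱ. -/

import Mathlib

open MeasureTheory Filter Topology
noncomputable section

/-- Euclidean space ℝ^d. -/
abbrev Ed (d : ℕ) := EuclideanSpace ℝ (Fin d)

/-- Partial derivative ∂ᵢ of a complex-valued function. -/
def pd {d : ℕ} (i : Fin d) (f : Ed d → ℂ) (x : Ed d) : ℂ :=
  fderiv ℝ f x (EuclideanSpace.single i 1)

/-- Laplacian Δ = ∑ᵢ ∂ᵢ². -/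
def lap {d : ℕ} (f : Ed d → ℂ) (x : Ed d) : ℂ := ∑ i, pd i (pd i f) x

/-- Radial derivative r∂ᵣ = ∑ᵢ xᵢ ∂ᵢ. -/
def rdr {d : ℕ} (f : Ed d → ℂ) (x : Ed d) : ℂ := ∑ i, (x i : ℂ) * pd i f x

/-- Legendre operator L f = ∇·((1-|x|²)∇f). -/
def legendreOp {d : ℕ} (f : Ed d → ℂ) (x : Ed d) : ℂ :=
  ∑ i, pd i (fun y => ((1 - ‖y‖ ^ 2 : ℝ) : ℂ) * pd i f y) x

/-- Prolate operator W f = L f - |x|² f. -/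
def prolateOp {d : ℕ} (f : Ed d → ℂ) (x : Ed d) : ℂ :=
  legendreOp f x - ((‖x‖ ^ 2 : ℝ) : ℂ) * f x

/-- The Fourier transform ℱf(p) = (2π)^{-d/2} ∫ e^{-i x·p} f(x) dx. -/
def FT {d : ℕ} (f : Ed d → ℂ) (p : Ed d) : ℂ :=
  (((2 * Real.pi) ^ (-(d : ℝ) / 2) : ℝ) : ℂ) *
    ∫ x : Ed d, Complex.exp (-Complex.I * ((inner ℝ x p : ℝ) : ℂ)) * f x

/-!
On Schwartz space, `W` is a noncommutative polynomial in the derivatives `∂ᵢ` and the coordinate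
multiplications `xᵢ`: `W = ∑ᵢ ∂ᵢ (1 - Q) ∂ᵢ - Q` with `Q = ∑ⱼ xⱼ²`. The unitary Fourier
transform swaps the generators up to a factor `i`, `ℱ ∂ᵢ = i xᵢ ℱ` and `ℱ xᵢ = i ∂ᵢ ℱ`, so with
`Δ = ∑ᵢ ∂ᵢ²` it gives `ℱ W = (Δ - ∑ᵢ xᵢ Δ xᵢ - Q) ℱ`, while `W = Δ - ∑ᵢ ∂ᵢ Q ∂ᵢ - Q`. The two
agree because the commutator `[∂ᵢ, xⱼ] = δᵢⱼ` is a scalar, which makes `∂ᵢ xⱼ² ∂ᵢ = xⱼ ∂ᵢ² xⱼ`.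
-/

lemma mul_conj_eq_neg_of_mul_eq_I_smul {R : Type*} [Ring R] [Algebra ℂ R] {F a b Y Y' : R}
    (ha : F * a = Complex.I • (b * F)) (hY : F * Y = Y' * F) :
    F * (a * Y * a) = -(b * Y' * b * F) := by
  calc F * (a * Y * a) = Complex.I • (b * (F * Y) * a) := by
        rw [← mul_assoc, ← mul_assoc, ha, smul_mul_assoc, smul_mul_assoc, mul_assoc b]
    _ = Complex.I • (b * Y' * (F * a)) := by rw [hY]; simp only [mul_assoc]
    _ = -(b * Y' * b * F) := by
        rw [ha, mul_smul_comm, smul_smul, Complex.I_mul_I, neg_one_smul, mul_assoc (b * Y')]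

namespace SchwartzMap

open LineDeriv Real Complex FourierTransform
open scoped RealInnerProductSpace

variable {V : Type*} [NormedAddCommGroup V] [InnerProductSpace ℝ V] {ι : Type*} [Fintype ι]

abbrev lineDerivCLM (m : V) : 𝓢(V, ℂ) →L[ℂ] 𝓢(V, ℂ) := lineDerivOpCLM ℂ 𝓢(V, ℂ) m

def coordMul (m : V) : 𝓢(V, ℂ) →L[ℂ] 𝓢(V, ℂ) := smulLeftCLM ℂ (fun x => ((⟪x, m⟫ : ℝ) : ℂ))

lemma coordMul_apply (m : V) (f : 𝓢(V, ℂ)) (x : V) : coordMul m f x = ⟪x, m⟫ * f x := by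
  have hm : (fun x : V => ((⟪x, m⟫ : ℝ) : ℂ)).HasTemperateGrowth := by fun_prop
  simp [coordMul, hm]

lemma coordMul_smul (c : ℝ) (m : V) : coordMul (c • m) = (c : ℂ) • coordMul m := by
  ext f x
  simp [coordMul_apply, real_inner_smul_right]
  ring

lemma smulLeftCLM_inner_eq_coordMul (m : V) (f : 𝓢(V, ℂ)) :
    smulLeftCLM ℂ (⟪·, m⟫) f = coordMul m f :=
  (smulLeftCLM_ofReal ℂ (by fun_prop) f).symm

lemma lineDerivOp_coordMul (m n : V) (f : 𝓢(V, ℂ)) :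
    ∂_{m} (coordMul n f) = coordMul n (∂_{m} f) + (⟪m, n⟫ : ℂ) • f := by
  ext x
  have hn : HasFDerivAt (fun y : V => ((⟪y, n⟫ : ℝ) : ℂ))
      (ofRealCLM.comp ((innerSL ℝ).flip n)) x :=
    (ofRealCLM.comp ((innerSL ℝ).flip n)).hasFDerivAt
  have hf : ⇑(coordMul n f) = fun y => ((⟪y, n⟫ : ℝ) : ℂ) * f y := funext (coordMul_apply n f)
  rw [lineDerivOp_apply_eq_fderiv, hf, (hn.fun_mul (f.hasFDerivAt x)).fderiv]
  simp [coordMul_apply, lineDerivOp_apply_eq_fderiv, real_inner_comm, innerSL_apply_apply ℝ]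
  ring

lemma lineDerivCLM_mul_coordMul (m n : V) :
    lineDerivCLM m * coordMul n = coordMul n * lineDerivCLM m + (⟪m, n⟫ : ℂ) • 1 :=
  ContinuousLinearMap.ext (lineDerivOp_coordMul m n)

lemma lineDerivCLM_mul_coordMul_sq_mul_lineDerivCLM (m n : V) :
    lineDerivCLM m * (coordMul n * coordMul n) * lineDerivCLM m =
      coordMul n * (lineDerivCLM m * lineDerivCLM m) * coordMul n := by
  have h := lineDerivCLM_mul_coordMul m n
  calc lineDerivCLM m * (coordMul n * coordMul n) * lineDerivCLM m
      = (lineDerivCLM m * coordMul n) * (coordMul n * lineDerivCLM m) := by noncomm_ring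
    _ = coordMul n * lineDerivCLM m * (coordMul n * lineDerivCLM m)
          + (⟪m, n⟫ : ℂ) • (coordMul n * lineDerivCLM m) := by
        rw [h, add_mul, smul_mul_assoc, one_mul]
    _ = (coordMul n * lineDerivCLM m) * (lineDerivCLM m * coordMul n) := by
        rw [h, mul_add, mul_smul_comm, mul_one]
    _ = coordMul n * (lineDerivCLM m * lineDerivCLM m) * coordMul n := by noncomm_ring

def lineDerivSqSum (e : ι → V) : 𝓢(V, ℂ) →L[ℂ] 𝓢(V, ℂ) :=
  ∑ i, lineDerivCLM (e i) * lineDerivCLM (e i)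

def coordMulSqSum (e : ι → V) : 𝓢(V, ℂ) →L[ℂ] 𝓢(V, ℂ) :=
  ∑ i, coordMul (e i) * coordMul (e i)

def prolateCLM (e : ι → V) : 𝓢(V, ℂ) →L[ℂ] 𝓢(V, ℂ) :=
  ∑ i, lineDerivCLM (e i) * (1 - coordMulSqSum e) * lineDerivCLM (e i) - coordMulSqSum e

lemma coordMulSqSum_apply (b : OrthonormalBasis ι ℝ V) (f : 𝓢(V, ℂ)) (x : V) :
    coordMulSqSum b f x = ((‖x‖ ^ 2 : ℝ) : ℂ) * f x := by
  simp [coordMulSqSum, sum_apply, coordMul_apply, ← b.sum_sq_inner_left x, Finset.sum_mul, sq,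
    mul_assoc]

lemma prolateCLM_eq (e : ι → V) :
    prolateCLM e = lineDerivSqSum e -
      ∑ i, lineDerivCLM (e i) * coordMulSqSum e * lineDerivCLM (e i) - coordMulSqSum e := by
  simp [prolateCLM, lineDerivSqSum, mul_sub, sub_mul, Finset.sum_sub_distrib]

lemma sum_coordMul_mul_lineDerivSqSum_mul_coordMul (e : ι → V) :
    ∑ i, coordMul (e i) * lineDerivSqSum e * coordMul (e i) =
      ∑ i, lineDerivCLM (e i) * coordMulSqSum e * lineDerivCLM (e i) := by
  simp only [lineDerivSqSum, coordMulSqSum, Finset.mul_sum, Finset.sum_mul,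
    lineDerivCLM_mul_coordMul_sq_mul_lineDerivCLM]
  exact Finset.sum_comm

variable [FiniteDimensional ℝ V]

variable (V) in
def fourierScale : V ≃L[ℝ] V :=
  (LinearEquiv.smulOfNeZero ℝ V (2 * π)⁻¹ (by positivity)).toContinuousLinearEquiv

lemma fourierScale_apply (p : V) : fourierScale V p = (2 * π)⁻¹ • p := rfl

variable [MeasurableSpace V] [BorelSpace V]

lemma fourier_lineDerivOp_eq_coordMul (m : V) (f : 𝓢(V, ℂ)) :
    𝓕 (∂_{m} f) = (2 * π * I) • coordMul m (𝓕 f) := by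
  rw [fourier_lineDerivOp_eq, smulLeftCLM_inner_eq_coordMul]

lemma lineDerivOp_fourier_eq_coordMul (m : V) (f : 𝓢(V, ℂ)) :
    ∂_{m} (𝓕 f) = -(2 * π * I) • 𝓕 (coordMul m f) := by
  rw [lineDerivOp_fourier_eq, smulLeftCLM_inner_eq_coordMul, fourier_smul]

variable (V) in
/-- Mathlib's `𝓕` has kernel `e^{-2πi⟪x, ξ⟫}`; at `ξ = (2π)⁻¹ • p` the kernel becomes
`e^{-i⟪x, p⟫}`, and the factor `(2π)^{-n/2}` makes the transform unitary. -/
def unitaryFourier : 𝓢(V, ℂ) →L[ℂ] 𝓢(V, ℂ) :=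
  (((2 * π) ^ (-(Module.finrank ℝ V : ℝ) / 2) : ℝ) : ℂ) •
    (compCLMOfContinuousLinearEquiv ℂ (fourierScale V) ∘L fourierTransformCLM ℂ)

lemma unitaryFourier_apply (f : 𝓢(V, ℂ)) (p : V) :
    unitaryFourier V f p =
      (((2 * π) ^ (-(Module.finrank ℝ V : ℝ) / 2) : ℝ) : ℂ) * 𝓕 f ((2 * π)⁻¹ • p) := rfl

lemma unitaryFourier_mul_lineDerivCLM (m : V) :
    unitaryFourier V * lineDerivCLM m = I • (coordMul m * unitaryFourier V) := by
  ext f p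
  simp [unitaryFourier_apply, coordMul_apply, fourier_lineDerivOp_eq_coordMul,
    real_inner_smul_left]
  field_simp

lemma unitaryFourier_mul_coordMul (m : V) :
    unitaryFourier V * coordMul m = I • (lineDerivCLM m * unitaryFourier V) := by
  ext f p
  simp [unitaryFourier, lineDerivOp_compCLMOfContinuousLinearEquiv,
    lineDerivOp_fourier_eq_coordMul, fourierScale_apply, coordMul_smul, fourier_smul]
  field_simp
  ring_nf
  simp [I_sq]

lemma unitaryFourier_mul_conj_lineDerivCLM {Y Y' : 𝓢(V, ℂ) →L[ℂ] 𝓢(V, ℂ)}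
    (h : unitaryFourier V * Y = Y' * unitaryFourier V) (m : V) :
    unitaryFourier V * (lineDerivCLM m * Y * lineDerivCLM m) =
      -(coordMul m * Y' * coordMul m * unitaryFourier V) :=
  mul_conj_eq_neg_of_mul_eq_I_smul (unitaryFourier_mul_lineDerivCLM m) h

lemma unitaryFourier_mul_conj_coordMul {Y Y' : 𝓢(V, ℂ) →L[ℂ] 𝓢(V, ℂ)}
    (h : unitaryFourier V * Y = Y' * unitaryFourier V) (m : V) :
    unitaryFourier V * (coordMul m * Y * coordMul m) =
      -(lineDerivCLM m * Y' * lineDerivCLM m * unitaryFourier V) :=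
  mul_conj_eq_neg_of_mul_eq_I_smul (unitaryFourier_mul_coordMul m) h

lemma unitaryFourier_mul_lineDerivSqSum (e : ι → V) :
    unitaryFourier V * lineDerivSqSum e = -coordMulSqSum e * unitaryFourier V := by
  have h := unitaryFourier_mul_conj_lineDerivCLM (V := V) (Y := 1) (Y' := 1) (by simp)
  simp only [mul_one] at h
  simp [lineDerivSqSum, coordMulSqSum, Finset.mul_sum, Finset.sum_mul, h]

lemma unitaryFourier_mul_coordMulSqSum (e : ι → V) :
    unitaryFourier V * coordMulSqSum e = -lineDerivSqSum e * unitaryFourier V := by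
  have h := unitaryFourier_mul_conj_coordMul (V := V) (Y := 1) (Y' := 1) (by simp)
  simp only [mul_one] at h
  simp [lineDerivSqSum, coordMulSqSum, Finset.mul_sum, Finset.sum_mul, h]

lemma unitaryFourier_mul_prolateCLM (e : ι → V) :
    unitaryFourier V * prolateCLM e = prolateCLM e * unitaryFourier V := by
  have hQ := unitaryFourier_mul_coordMulSqSum (V := V) e
  simp only [prolateCLM_eq, mul_sub, sub_mul, Finset.mul_sum, Finset.sum_mul,
    unitaryFourier_mul_lineDerivSqSum, hQ, unitaryFourier_mul_conj_lineDerivCLM hQ]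
  simp only [mul_neg, neg_mul, neg_neg, ← Finset.sum_mul,
    sum_coordMul_mul_lineDerivSqSum_mul_coordMul]
  abel

end SchwartzMap

open SchwartzMap

lemma pd_eq_lineDerivCLM {d : ℕ} (i : Fin d) (f : 𝓢(Ed d, ℂ)) :
    pd i ⇑f = ⇑(lineDerivCLM (EuclideanSpace.single i 1) f) :=
  rfl

lemma prolateOp_eq_prolateCLM {d : ℕ} (f : 𝓢(Ed d, ℂ)) :
    prolateOp ⇑f = ⇑(prolateCLM (EuclideanSpace.basisFun (Fin d) ℝ) f) := by
  set b := EuclideanSpace.basisFun (Fin d) ℝ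
  have hweight : ∀ i, (fun y => ((1 - ‖y‖ ^ 2 : ℝ) : ℂ) * pd i f y) =
      ⇑((1 - coordMulSqSum b) (lineDerivCLM (b i) f)) := by
    intro i
    ext y
    simp [coordMulSqSum_apply, pd_eq_lineDerivCLM, sub_mul, b]
  ext x
  simp only [prolateOp, legendreOp, hweight]
  simp only [pd_eq_lineDerivCLM]
  simp [prolateCLM, coordMulSqSum_apply, sum_apply, b]

lemma FT_eq_unitaryFourier {d : ℕ} (f : 𝓢(Ed d, ℂ)) : FT ⇑f = ⇑(unitaryFourier (Ed d) f) := by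
  ext p
  rw [unitaryFourier_apply, FT, fourier_coe, Real.fourier_eq', finrank_euclideanSpace_fin]
  congr 1
  refine integral_congr_ae (Eventually.of_forall fun x => ?_)
  simp only [smul_eq_mul, real_inner_smul_right]
  congr 2
  field_simp
  push_cast
  ring

theorem fourier_prolate_commute (d : ℕ) (f : SchwartzMap (Ed d) ℂ) (p : Ed d) :
    FT (prolateOp (⇑f)) p = prolateOp (FT (⇑f)) p := by
  rw [prolateOp_eq_prolateCLM, FT_eq_unitaryFourier, FT_eq_unitaryFourier, prolateOp_eq_prolateCLM,
    ← mul_apply_eq_comp, unitaryFourier_mul_prolateCLM, mul_apply_eq_comp]
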